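/- Let T ∈ (0,∞], let A : [0,T) → ℝ^{d×d} be continuous with A(t) symmetric and of operator norm ‖A(t)‖ ≤ β for every t, and let Σ : [0,T) → ℝ^{d×d} be differentiable with Σ(t) symmetric, Σ(0) positive definite, and Σ'(t) = −(1/2)(Σ(t) A(t) + A(t) Σ(t)) for all t. Let λ_min and λ_max denote the smallest and largest eigenvalues of Σ(0). Then for all t ∈ [0,T): e^{−βt} λ_min · I ≤ Σ(t) ≤ e^{βt} λ_max · I in the Loewner order. -/

import Mathlib

/-!
Comparison with exponential barriers. If `S 0 - l • 1` is positive definite, then so is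
`S t - l e^{σt} • 1` as long as `σ` has the sign opposite to `l` and `|σ| > β`: at the first time
`t₀` it becomes singular, `S t₀` acts on a kernel vector `v` as the scalar `b = l e^{σ t₀}`, so
`vᵀ(S t - l e^{σt} • 1)v` vanishes at `t₀`, is positive before, and has derivative
`-b (vᵀAv + σ vᵀv) > 0` there. Taking `σ = ∓(β + ε)` and letting `ε → 0` gives the lower bound;
the upper bound is the lower bound for `-S`, which solves the same equation.
-/

open Matrix Set Filter Topology Real
open scoped ENNReal

namespace Matrix

variable {n : Type*}

lemma PosSemidef.sub_smul_one_of_le [DecidableEq n] {M : Matrix n n ℝ} {c c' : ℝ}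
    (hM : (M - c • 1).PosSemidef) (hc : c' ≤ c) : (M - c' • 1).PosSemidef := by
  convert hM.add (PosSemidef.one.smul (sub_nonneg.mpr hc)) using 1
  rw [sub_smul]; abel

lemma PosSemidef.posDef_sub_smul_one [DecidableEq n] {M : Matrix n n ℝ} {c ε : ℝ}
    (hM : (M - c • 1).PosSemidef) (hε : 0 < ε) : (M - (c - ε) • 1).PosDef := by
  convert PosDef.posSemidef_add hM (PosDef.one.smul hε) using 1
  rw [sub_smul]; abel

variable [Fintype n]

lemma dotProduct_mulVec_smul_self (M : Matrix n n ℝ) (c : ℝ) (v : n → ℝ) :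
    (c • v) ⬝ᵥ M *ᵥ (c • v) = c ^ 2 * (v ⬝ᵥ M *ᵥ v) := by
  simp only [mulVec_smul, smul_dotProduct, dotProduct_smul, smul_eq_mul]; ring

lemma dotProduct_anticommutator_mulVec {S : Matrix n n ℝ} (hS : S.IsHermitian) (A : Matrix n n ℝ)
    {v : n → ℝ} {b : ℝ} (hv : S *ᵥ v = b • v) :
    v ⬝ᵥ (S * A + A * S) *ᵥ v = 2 * b * (v ⬝ᵥ A *ᵥ v) := by
  have hvS : v ᵥ* S = b • v := by
    rw [← mulVec_transpose, ← conjTranspose_eq_transpose_of_trivial, hS.eq, hv]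
  rw [add_mulVec, dotProduct_add, ← mulVec_mulVec, ← mulVec_mulVec, dotProduct_mulVec, hvS, hv,
    mulVec_smul, smul_dotProduct, dotProduct_smul, smul_eq_mul]
  ring

lemma exists_dotProduct_mulVec_nonpos_of_not_posDef {M : Matrix n n ℝ} (hM : M.IsHermitian)
    (h : ¬M.PosDef) : ∃ w ∈ Metric.sphere (0 : n → ℝ) 1, w ⬝ᵥ M *ᵥ w ≤ 0 := by
  simp only [posDef_iff_dotProduct_mulVec, hM, true_and, star_trivial, not_forall, not_lt] at h
  obtain ⟨x, hx, hxM⟩ := h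
  refine ⟨‖x‖⁻¹ • x, by simp [norm_smul, hx], ?_⟩
  rw [dotProduct_mulVec_smul_self]
  exact mul_nonpos_of_nonneg_of_nonpos (sq_nonneg _) hxM

variable [DecidableEq n]

lemma posSemidef_sub_smul_one_iff {M : Matrix n n ℝ} (hM : M.IsHermitian) {c : ℝ} :
    (M - c • 1).PosSemidef ↔ ∀ x, c * (x ⬝ᵥ x) ≤ x ⬝ᵥ M *ᵥ x := by
  simp only [posSemidef_iff_dotProduct_mulVec, hM.sub (isHermitian_one.smul (.all c)), true_and,
    star_trivial, sub_mulVec, smul_mulVec, one_mulVec, dotProduct_sub, dotProduct_smul,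
    smul_eq_mul, sub_nonneg]

lemma posSemidef_sub_smul_one_of_tendsto {M : Matrix n n ℝ} (hM : M.IsHermitian)
    {ι : Type*} {F : Filter ι} [F.NeBot] {c : ι → ℝ} {c₀ : ℝ} (hc : Tendsto c F (𝓝 c₀))
    (h : ∀ᶠ i in F, (M - c i • 1).PosSemidef) : (M - c₀ • 1).PosSemidef := by
  rw [posSemidef_sub_smul_one_iff hM]
  exact fun x => le_of_tendsto (hc.mul_const _)
    (h.mono fun i hi => (posSemidef_sub_smul_one_iff hM).1 hi x)

end Matrix

lemma HasDerivAt.eventually_lt_of_pos {f : ℝ → ℝ} {f' x : ℝ} (hf : HasDerivAt f f' x)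
    (hf' : 0 < f') : ∀ᶠ s in 𝓝[<] x, f s < f x := by
  have hslope := (hasDerivAt_iff_tendsto_slope.mp hf).mono_left (nhdsLT_le_nhdsNE x)
  filter_upwards [hslope.eventually (eventually_gt_nhds hf'), self_mem_nhdsWithin] with s hs hsx
  exact (slope_pos_iff_gt hsx).mp hs

variable {n : Type*} [Fintype n]

lemma hasDerivAt_dotProduct_mulVec {P : ℝ → Matrix n n ℝ} {P' : Matrix n n ℝ} {t : ℝ}
    (hP : ∀ i j, HasDerivAt (fun s => P s i j) (P' i j) t) (v : n → ℝ) :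
    HasDerivAt (fun s => v ⬝ᵥ P s *ᵥ v) (v ⬝ᵥ P' *ᵥ v) t := by
  simp only [dotProduct, mulVec, Finset.mul_sum]
  exact HasDerivAt.fun_sum fun i _ => HasDerivAt.fun_sum fun j _ =>
    ((hP i j).mul_const (v j)).const_mul (v i)

lemma continuousOn_dotProduct_mulVec {P : ℝ → Matrix n n ℝ} {s : Set ℝ} (hP : ContinuousOn P s) :
    ContinuousOn (fun p : ℝ × (n → ℝ) => p.2 ⬝ᵥ P p.1 *ᵥ p.2) (s ×ˢ univ) :=
  (continuous_snd.dotProduct (continuous_fst.matrix_mulVec continuous_snd)).comp_continuousOn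
    ((hP.comp continuousOn_fst fun _ hp => hp.1).prodMk continuousOn_snd)

/-- `t₀` is the least time coordinate of the compact set of pairs (time, unit vector) at which the
quadratic form is nonpositive. -/
lemma exists_first_not_posDef {P : ℝ → Matrix n n ℝ} {t₁ : ℝ} (hP : ContinuousOn P (Icc 0 t₁))
    (hherm : ∀ t ∈ Icc 0 t₁, (P t).IsHermitian) {t₂ : ℝ} (ht₂ : t₂ ∈ Icc 0 t₁)
    (hnot : ¬(P t₂).PosDef) :
    ∃ t₀ ∈ Icc 0 t₁, ∃ v ≠ 0, v ⬝ᵥ P t₀ *ᵥ v ≤ 0 ∧ ∀ s ∈ Ico 0 t₀, (P s).PosDef := by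
  set K := (Icc 0 t₁ ×ˢ Metric.sphere (0 : n → ℝ) 1) ∩
    (fun p : ℝ × (n → ℝ) => p.2 ⬝ᵥ P p.1 *ᵥ p.2) ⁻¹' Iic 0
  have hK : IsCompact K :=
    (isCompact_Icc.prod (isCompact_sphere 0 1)).of_isClosed_subset
      (((continuousOn_dotProduct_mulVec hP).mono (prod_mono_right (subset_univ _))
        ).preimage_isClosed_of_isClosed (isClosed_Icc.prod Metric.isClosed_sphere) isClosed_Iic)
      inter_subset_left
  have hKne : K.Nonempty := by
    obtain ⟨w, hw, hwP⟩ := exists_dotProduct_mulVec_nonpos_of_not_posDef (hherm t₂ ht₂) hnot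
    exact ⟨(t₂, w), ⟨ht₂, hw⟩, hwP⟩
  obtain ⟨⟨t₀, v⟩, ⟨⟨ht₀, hv⟩, hvP⟩, hmin⟩ := hK.exists_isMinOn hKne continuousOn_fst
  refine ⟨t₀, ht₀, v, ne_zero_of_mem_sphere one_ne_zero ⟨v, hv⟩, hvP, fun s hs => ?_⟩
  have hs₁ : s ∈ Icc 0 t₁ := ⟨hs.1, hs.2.le.trans ht₀.2⟩
  by_contra hs'
  obtain ⟨w, hw, hwP⟩ := exists_dotProduct_mulVec_nonpos_of_not_posDef (hherm s hs₁) hs'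
  exact hs.2.not_ge (@hmin (s, w) ⟨⟨hs₁, hw⟩, hwP⟩)

lemma posDef_of_deriv_pos_on_ker {P P' : ℝ → Matrix n n ℝ} {t₁ : ℝ}
    (hP : ∀ t ∈ Icc 0 t₁, ∀ i j, HasDerivAt (fun s => P s i j) (P' t i j) t)
    (hherm : ∀ t ∈ Icc 0 t₁, (P t).IsHermitian) (h0 : (P 0).PosDef)
    (hker : ∀ t ∈ Icc 0 t₁, ∀ v, v ≠ 0 → P t *ᵥ v = 0 → 0 < v ⬝ᵥ P' t *ᵥ v) :
    ∀ t ∈ Icc 0 t₁, (P t).PosDef := by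
  by_contra! ⟨t₂, ht₂, hnot⟩
  have hcont : ContinuousOn P (Icc 0 t₁) := continuousOn_pi.2 fun i => continuousOn_pi.2
    fun j t ht => (hP t ht i j).continuousAt.continuousWithinAt
  obtain ⟨t₀, ht₀, v, hv0, hvP, hbefore⟩ := exists_first_not_posDef hcont hherm ht₂ hnot
  have ht₀pos : 0 < t₀ := by
    refine ht₀.1.lt_of_ne fun h => ?_
    subst h
    exact (h0.dotProduct_mulVec_pos hv0).not_ge (by simpa using hvP)
  have hpsd : (P t₀).PosSemidef := by
    refine .of_dotProduct_mulVec_nonneg (hherm t₀ ht₀) fun x => ?_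
    refine ge_of_tendsto
      ((hasDerivAt_dotProduct_mulVec (hP t₀ ht₀) x).continuousAt.tendsto.mono_left
        (nhdsWithin_le_nhds (s := Iio t₀))) ?_
    filter_upwards [Ico_mem_nhdsLT ht₀pos] with s hs
    simpa using (hbefore s hs).posSemidef.dotProduct_mulVec_nonneg x
  have hker₀ : P t₀ *ᵥ v = 0 :=
    (hpsd.dotProduct_mulVec_zero_iff v).mp (le_antisymm (by simpa using hvP)
      (hpsd.dotProduct_mulVec_nonneg v))
  obtain ⟨s, hs_lt, hs⟩ := (((hasDerivAt_dotProduct_mulVec (hP t₀ ht₀) v).eventually_lt_of_pos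
    (hker t₀ ht₀ v hv0 hker₀)).and (Ico_mem_nhdsLT ht₀pos)).exists
  have hpos := (hbefore s hs).dotProduct_mulVec_pos hv0
  rw [star_trivial] at hpos
  exact (hs_lt.trans_le hvP).not_gt hpos

structure SolvesAnticommutatorFlowOn (β : ℝ) (A S : ℝ → Matrix n n ℝ) (t₁ : ℝ) : Prop where
  isHermitian : ∀ t ∈ Icc 0 t₁, (S t).IsHermitian
  quadratic_bound : ∀ t ∈ Icc 0 t₁, ∀ v, |v ⬝ᵥ A t *ᵥ v| ≤ β * (v ⬝ᵥ v)
  hasDerivAt : ∀ t ∈ Icc 0 t₁, ∀ i j,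
    HasDerivAt (fun s => S s i j) ((-(1/2 : ℝ) • (S t * A t + A t * S t)) i j) t

namespace SolvesAnticommutatorFlowOn

variable {β t₁ : ℝ} {A S : ℝ → Matrix n n ℝ}

lemma neg (hS : SolvesAnticommutatorFlowOn β A S t₁) : SolvesAnticommutatorFlowOn β A (-S) t₁ where
  isHermitian t ht := (hS.isHermitian t ht).neg
  quadratic_bound := hS.quadratic_bound
  hasDerivAt t ht i j := by
    have hneg : (-(1/2 : ℝ) • ((-S) t * A t + A t * (-S) t)) i j =
        -(-(1/2 : ℝ) • (S t * A t + A t * S t)) i j := by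
      simp only [Pi.neg_apply, Matrix.neg_mul, Matrix.mul_neg, ← neg_add, smul_neg,
        Matrix.neg_apply]
    exact hneg ▸ (hS.hasDerivAt t ht i j).fun_neg

variable [DecidableEq n]

/-- `hσ` says that `σ` has the sign opposite to `l` and `|σ| > β`. -/
lemma posDef_sub_smul_exp (hS : SolvesAnticommutatorFlowOn β A S t₁) {l σ : ℝ}
    (hσ : β * |l| < -(l * σ)) (h0 : (S 0 - l • 1).PosDef) :
    ∀ t ∈ Icc 0 t₁, (S t - (l * exp (σ * t)) • 1).PosDef := by
  refine posDef_of_deriv_pos_on_ker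
    (P' := fun t => -(1/2 : ℝ) • (S t * A t + A t * S t) - (l * (exp (σ * t) * σ)) • 1)
    (fun t ht i j => ?_) (fun t ht => (hS.isHermitian t ht).sub (isHermitian_one.smul (.all _)))
    (by simpa using h0) fun t ht v hv hker => ?_
  · have hb : HasDerivAt (fun s => l * exp (σ * s)) (l * (exp (σ * t) * σ)) t := by
      simpa using (((hasDerivAt_id t).const_mul σ).exp).const_mul l
    exact (hS.hasDerivAt t ht i j).fun_sub (hb.mul_const ((1 : Matrix n n ℝ) i j))
  · have hSv : S t *ᵥ v = (l * exp (σ * t)) • v := by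
      rwa [sub_mulVec, smul_mulVec, one_mulVec, sub_eq_zero] at hker
    have hr : 0 < v ⬝ᵥ v := lt_of_le_of_ne (by simpa using dotProduct_star_self_nonneg v)
      (by simpa [eq_comm] using hv)
    have hla : l * (v ⬝ᵥ A t *ᵥ v) ≤ β * |l| * (v ⬝ᵥ v) :=
      calc l * (v ⬝ᵥ A t *ᵥ v) ≤ |l| * |v ⬝ᵥ A t *ᵥ v| := by rw [← abs_mul]; exact le_abs_self _
        _ ≤ |l| * (β * (v ⬝ᵥ v)) := by gcongr; exact hS.quadratic_bound t ht v
        _ = β * |l| * (v ⬝ᵥ v) := by ring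
    have hq : v ⬝ᵥ (-(1/2 : ℝ) • (S t * A t + A t * S t) - (l * (exp (σ * t) * σ)) • 1) *ᵥ v =
        exp (σ * t) * -(l * (v ⬝ᵥ A t *ᵥ v) + l * σ * (v ⬝ᵥ v)) := by
      rw [sub_mulVec, dotProduct_sub, smul_mulVec, dotProduct_smul,
        dotProduct_anticommutator_mulVec (hS.isHermitian t ht) _ hSv, smul_mulVec, one_mulVec,
        dotProduct_smul, smul_eq_mul, smul_eq_mul]
      ring
    rw [hq]
    exact mul_pos (exp_pos _) (by nlinarith [mul_lt_mul_of_pos_right hσ hr])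

lemma lower_bound_of_pos (hS : SolvesAnticommutatorFlowOn β A S t₁) {l : ℝ} (hl : 0 < l)
    (h0 : (S 0 - l • 1).PosSemidef) :
    ∀ t ∈ Icc 0 t₁, (S t - (exp (-β * t) * l) • 1).PosSemidef := by
  intro t ht
  refine posSemidef_sub_smul_one_of_tendsto (hS.isHermitian t ht)
    (c := fun ε => (l - ε) * exp (-(β + ε) * t)) (F := 𝓝[>] 0) ?_ ?_
  · have hc : Continuous fun ε : ℝ => (l - ε) * exp (-(β + ε) * t) := by fun_prop
    simpa [mul_comm] using (hc.tendsto 0).mono_left nhdsWithin_le_nhds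
  · filter_upwards [Ioo_mem_nhdsGT hl] with ε hε
    refine (hS.posDef_sub_smul_exp ?_ (h0.posDef_sub_smul_one hε.1) t ht).posSemidef
    rw [abs_of_pos (sub_pos.2 hε.2)]
    nlinarith [hε.1, hε.2]

lemma lower_bound_of_nonpos (hS : SolvesAnticommutatorFlowOn β A S t₁) {l : ℝ} (hl : l ≤ 0)
    (h0 : (S 0 - l • 1).PosSemidef) :
    ∀ t ∈ Icc 0 t₁, (S t - (exp (β * t) * l) • 1).PosSemidef := by
  intro t ht
  refine posSemidef_sub_smul_one_of_tendsto (hS.isHermitian t ht)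
    (c := fun ε => (l - ε) * exp ((β + ε) * t)) (F := 𝓝[>] 0) ?_ ?_
  · have hc : Continuous fun ε : ℝ => (l - ε) * exp ((β + ε) * t) := by fun_prop
    simpa [mul_comm] using (hc.tendsto 0).mono_left nhdsWithin_le_nhds
  · filter_upwards [self_mem_nhdsWithin] with ε (hε : 0 < ε)
    refine (hS.posDef_sub_smul_exp ?_ (h0.posDef_sub_smul_one hε) t ht).posSemidef
    rw [abs_of_neg (by linarith)]
    nlinarith

lemma upper_bound (hS : SolvesAnticommutatorFlowOn β A S t₁) (hpsd : (S 0).PosSemidef) {L : ℝ}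
    (h0 : (L • 1 - S 0).PosSemidef) :
    ∀ t ∈ Icc 0 t₁, ((exp (β * t) * L) • 1 - S t).PosSemidef := by
  intro t ht
  rcases isEmpty_or_nonempty n with _ | ⟨⟨i⟩⟩
  · rw [Subsingleton.elim ((exp (β * t) * L) • 1 - S t) 0]
    exact .zero
  have hL : 0 ≤ L := by simpa using (hpsd.add h0).diag_nonneg (i := i)
  have h0' : ((-S) 0 - (-L) • 1).PosSemidef := by
    convert h0 using 1; rw [Pi.neg_apply, neg_smul]; abel
  convert hS.neg.lower_bound_of_nonpos (neg_nonpos.2 hL) h0' t ht using 1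
  rw [Pi.neg_apply, mul_neg, neg_smul]; abel

end SolvesAnticommutatorFlowOn

theorem two_sided_exponential_eigenvalue_bound_general {d : ℕ} (T : ℝ≥0∞) (β : ℝ)
    (A S : ℝ → Matrix (Fin d) (Fin d) ℝ)
    (hAbound : ∀ t : ℝ, 0 ≤ t → ENNReal.ofReal t < T →
      ∀ v : Fin d → ℝ, |v ⬝ᵥ (A t).mulVec v| ≤ β * (v ⬝ᵥ v))
    (hSsymm : ∀ t : ℝ, 0 ≤ t → ENNReal.ofReal t < T → (S t).IsSymm)
    (hS0 : (S 0).PosDef)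
    (hderiv : ∀ t : ℝ, 0 ≤ t → ENNReal.ofReal t < T → ∀ i j,
      HasDerivAt (fun s => S s i j) ((-(1/2 : ℝ) • (S t * A t + A t * S t)) i j) t)
    (lmin lmax : ℝ)
    (hmin : (S 0 - lmin • (1 : Matrix (Fin d) (Fin d) ℝ)).PosSemidef)
    (hmax : (lmax • (1 : Matrix (Fin d) (Fin d) ℝ) - S 0).PosSemidef) :
    ∀ t : ℝ, 0 ≤ t → ENNReal.ofReal t < T →
      (S t - (Real.exp (-β * t) * lmin) • (1 : Matrix (Fin d) (Fin d) ℝ)).PosSemidef ∧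
      ((Real.exp (β * t) * lmax) • (1 : Matrix (Fin d) (Fin d) ℝ) - S t).PosSemidef := by
  intro t ht htT
  have hdom : ∀ s ∈ Icc 0 t, 0 ≤ s ∧ ENNReal.ofReal s < T :=
    fun s hs => ⟨hs.1, (ENNReal.ofReal_le_ofReal hs.2).trans_lt htT⟩
  have hflow : SolvesAnticommutatorFlowOn β A S t :=
    { isHermitian := fun s hs => isHermitian_iff_isSymm.mpr (hSsymm s (hdom s hs).1 (hdom s hs).2)
      quadratic_bound := fun s hs => hAbound s (hdom s hs).1 (hdom s hs).2
      hasDerivAt := fun s hs => hderiv s (hdom s hs).1 (hdom s hs).2 }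
  have ht' : t ∈ Icc 0 t := ⟨ht, le_rfl⟩
  refine ⟨?_, hflow.upper_bound hS0.posSemidef hmax t ht'⟩
  rcases lt_or_ge 0 lmin with hlmin | hlmin
  · exact hflow.lower_bound_of_pos hlmin hmin t ht'
  · have hSt := hflow.lower_bound_of_nonpos le_rfl (by simpa using hS0.posSemidef) t ht'
    exact hSt.sub_smul_one_of_le
      (by rw [mul_zero]; exact mul_nonpos_of_nonneg_of_nonpos (exp_pos _).le hlmin)

/-- A priori two-sided exponential eigenvalue bounds along the flow
`Σ' = −(1/2)(ΣA + AΣ)` with `A(t)` symmetric of operator norm at most `β`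
(for symmetric matrices, `‖A‖ ≤ β` iff `|vᵀAv| ≤ β|v|²` for all `v`):
`e^{−βt} λ_min · I ≤ Σ(t) ≤ e^{βt} λ_max · I`, where `λ_min · I ≤ Σ(0) ≤ λ_max · I`. -/
theorem two_sided_exponential_eigenvalue_bound {d : ℕ} (T : ℝ≥0∞) (hT : 0 < T) (β : ℝ)
    (A S : ℝ → Matrix (Fin d) (Fin d) ℝ)
    (hAcont : ∀ i j, ContinuousOn (fun t => A t i j) {t : ℝ | 0 ≤ t ∧ ENNReal.ofReal t < T})
    (hAsymm : ∀ t : ℝ, 0 ≤ t → ENNReal.ofReal t < T → (A t).IsSymm)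
    (hAbound : ∀ t : ℝ, 0 ≤ t → ENNReal.ofReal t < T →
      ∀ v : Fin d → ℝ, |v ⬝ᵥ (A t).mulVec v| ≤ β * (v ⬝ᵥ v))
    (hSsymm : ∀ t : ℝ, 0 ≤ t → ENNReal.ofReal t < T → (S t).IsSymm)
    (hS0 : (S 0).PosDef)
    (hderiv : ∀ t : ℝ, 0 ≤ t → ENNReal.ofReal t < T → ∀ i j,
      HasDerivAt (fun s => S s i j) ((-(1/2 : ℝ) • (S t * A t + A t * S t)) i j) t)
    (lmin lmax : ℝ)
    (hmin : (S 0 - lmin • (1 : Matrix (Fin d) (Fin d) ℝ)).PosSemidef)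
    (hmax : (lmax • (1 : Matrix (Fin d) (Fin d) ℝ) - S 0).PosSemidef) :
    ∀ t : ℝ, 0 ≤ t → ENNReal.ofReal t < T →
      (S t - (Real.exp (-β * t) * lmin) • (1 : Matrix (Fin d) (Fin d) ℝ)).PosSemidef ∧
      ((Real.exp (β * t) * lmax) • (1 : Matrix (Fin d) (Fin d) ℝ) - S t).PosSemidef :=
  two_sided_exponential_eigenvalue_bound_general T β A S hAbound hSsymm hS0 hderiv lmin lmax hmin
    hmax
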